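/- Fix b,c > 0. There exists a₀ > 0 such that for every a with 0 < a < a₀, if μ̄ is the weak limit of the measures (μ̂_n) associated with parameters (a,b,c), then μ̄-almost surely there is no infinite type-a cluster. -/

import Mathlib

open MeasureTheory Filter Topology

/-- The three edge types of the hexagonal lattice: `a` (horizontal),
`b` (NW/SE), `c` (NE/SW). -/
inductive EType : Type
  | a : EType
  | b : EType
  | c : EType
deriving DecidableEq

instance : Fintype EType where
  elems := {EType.a, EType.b, EType.c}
  complete := by intro x; cases x <;> simp

/-- A vertex of the (toroidal or infinite) hexagonal lattice with coordinates in `α`. -/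
abbrev HexVtx (α : Type) : Type := (α × α) × Bool

/-- An edge of the hexagonal lattice: its type together with coordinates in `α`. -/
abbrev HexEdge (α : Type) : Type := EType × α × α

/-- The `s`-type edge incident to the vertex `v`. -/
def edgeAt {α : Type} [Sub α] [One α] (v : HexVtx α) : EType → HexEdge α
  | .a => (.a, v.1)
  | .b => if v.2 then (.b, v.1) else (.b, (v.1.1, v.1.2 - 1))
  | .c => if v.2 then (.c, v.1) else (.c, (v.1.1 - 1, v.1.2))

/-- The two endpoints of an edge. -/
def ends {α : Type} [Add α] [One α] : HexEdge α → HexVtx α × HexVtx α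
  | (.a, x, y) => (((x, y), false), ((x, y), true))
  | (.b, x, y) => (((x, y), true), ((x, y + 1), false))
  | (.c, x, y) => (((x, y), true), ((x + 1, y), false))

/-- The 1-2 model vertex weight of a triple of incident edge spins. -/
def vWt (a b c : ℝ) (sa sb sc : Bool) : ℝ :=
  if sb = sc ∧ sa ≠ sb then a
  else if sa = sc ∧ sb ≠ sa then b
  else if sa = sb ∧ sc ≠ sa then c
  else 0

/-- Vertices of the toroidal lattice `H_n`. -/
abbrev VF (n : ℕ) : Type := HexVtx (ZMod n)

/-- Edges of the toroidal lattice `H_n`. -/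
abbrev EF (n : ℕ) : Type := HexEdge (ZMod n)

/-- Spin configurations on the edges of `H_n`; `true` means spin `+1`. -/
abbrev ConfF (n : ℕ) : Type := EF n → Bool

/-- The 1-2 model weight of a configuration on `H_n`. -/
def confWt (n : ℕ) [NeZero n] (a b c : ℝ) (σ : ConfF n) : ℝ :=
  ∏ v : VF n, vWt a b c (σ (edgeAt v .a)) (σ (edgeAt v .b)) (σ (edgeAt v .c))

/-- The 1-2 model partition function on `H_n`. -/
noncomputable def Zn (n : ℕ) [NeZero n] (a b c : ℝ) : ℝ :=
  ∑ σ : ConfF n, confWt n a b c σ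

/-- Vertices of the infinite hexagonal lattice `H`. -/
abbrev VI : Type := HexVtx ℤ

/-- Edges of the infinite hexagonal lattice `H`. -/
abbrev EI : Type := HexEdge ℤ

/-- Configurations on the infinite lattice: the space `Ω = {−1,+1}^𝔼`. -/
abbrev Config : Type := EI → Bool

/-- Periodic lift of a configuration on `H_n` to the infinite lattice. -/
def liftConf (n : ℕ) (σ : ConfF n) : Config :=
  fun e => σ (e.1, ((e.2.1 : ZMod n), (e.2.2 : ZMod n)))

/-- The pushforward `μ̂_n` on `Ω` of the 1-2 model measure `μ_n` on `H_n`. -/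
noncomputable def muHat (n : ℕ) [NeZero n] (a b c : ℝ) : Measure Config :=
  ∑ σ : ConfF n, ENNReal.ofReal (confWt n a b c σ / Zn n a b c) •
    Measure.dirac (liftConf n σ)

/-- `μ` is the weak limit of the sequence `μ̂_n` (tested against all bounded
continuous functions). -/
def IsWeakLimit (a b c : ℝ) (μ : Measure Config) : Prop :=
  IsProbabilityMeasure μ ∧
    ∀ f : BoundedContinuousFunction Config ℝ,
      Tendsto (fun n : ℕ => ∫ ω, f ω ∂ muHat (n + 1) a b c) atTop (𝓝 (∫ ω, f ω ∂ μ))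

/-- Adjacency in the hexagonal lattice `H`. -/
def hexAdj (u v : VI) : Prop :=
  ∃ e : EI, ends e = (u, v) ∨ ends e = (v, u)

/-- The vertex `v` has type `a` in the configuration `ω`: the spins of the two
non-horizontal incident edges agree and differ from that of the `a`-type edge. -/
def typeA (ω : Config) (v : VI) : Prop :=
  ω (edgeAt v .b) = ω (edgeAt v .c) ∧ ω (edgeAt v .a) ≠ ω (edgeAt v .b)

/-- Adjacency in the subgraph of `H` induced by the type-`a` vertices. -/
def aAdj (ω : Config) (u v : VI) : Prop :=
  hexAdj u v ∧ typeA ω u ∧ typeA ω v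

/-- The type-`a` cluster of the vertex `v` in the configuration `ω`. -/
def aCluster (ω : Config) (v : VI) : Set VI :=
  {u : VI | Relation.ReflTransGen (aAdj ω) v u}

/-!
A Peierls argument. An infinite type-`a` cluster at `v` contains self-avoiding type-`a`
paths from `v` of every length `3k`. On the torus `H_n` with `n > 6k`, such a path contains
`k` vertex-disjoint `b`- or `c`-edges whose `2k` endpoints all have type `a`; reversing the
spins of these edges is injective and raises the weight by a factor at least
`(min b c / a) ^ (2k)`. With `3 ^ (3k)` possible paths, `μ̂_n` gives the path event
probability at most `(27 (a / min b c) ^ 2) ^ k`. The event is clopen, so the bound passes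
to the weak limit, and it tends to `0` when `a < min b c / 6`.
-/

namespace OneTwoModel

open Classical

section Geometry

variable {α : Type} [AddGroup α] [One α]

def neighbor (x : HexVtx α) : EType → HexVtx α
  | .a => (x.1, !x.2)
  | .b => if x.2 then ((x.1.1, x.1.2 + 1), false) else ((x.1.1, x.1.2 - 1), true)
  | .c => if x.2 then ((x.1.1 + 1, x.1.2), false) else ((x.1.1 - 1, x.1.2), true)

lemma ends_edgeAt (x : HexVtx α) (t : EType) :
    ends (edgeAt x t) = (x, neighbor x t) ∨ ends (edgeAt x t) = (neighbor x t, x) := by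
  obtain ⟨⟨p, q⟩, _ | _⟩ := x <;> cases t <;> simp [edgeAt, ends, neighbor]

@[simp]
lemma edgeAt_fst (x : HexVtx α) (t : EType) : (edgeAt x t).1 = t := by
  obtain ⟨⟨p, q⟩, _ | _⟩ := x <;> cases t <;> simp [edgeAt]

lemma edgeAt_ends_fst (e : HexEdge α) : edgeAt (ends e).1 e.1 = e := by
  obtain ⟨_ | _ | _, p, q⟩ := e <;> simp [ends, edgeAt]

lemma edgeAt_ends_snd (e : HexEdge α) : edgeAt (ends e).2 e.1 = e := by
  obtain ⟨_ | _ | _, p, q⟩ := e <;> simp [ends, edgeAt]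

lemma ends_fst_ne_snd (e : HexEdge α) : (ends e).1 ≠ (ends e).2 := by
  obtain ⟨_ | _ | _, p, q⟩ := e <;> simp [ends]

lemma neighbor_neighbor_a (x : HexVtx α) : neighbor (neighbor x .a) .a = x := by
  simp [neighbor]

def endpoint {ι : Type} (m : ι → HexEdge α) (z : ι × Bool) : HexVtx α :=
  if z.2 then (ends (m z.1)).1 else (ends (m z.1)).2

lemma endpoint_eq_or {ι : Type} {m : ι → HexEdge α} {x : HexVtx α} {t : EType}
    (z : ι × Bool) (h : m z.1 = edgeAt x t) :
    endpoint m z = x ∨ endpoint m z = neighbor x t := by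
  rcases ends_edgeAt x t with he | he <;> cases hz : z.2 <;> simp [endpoint, hz, h, he]

lemma exists_endpoint_eq_of_edgeAt_eq {ι : Type} {m : ι → HexEdge α} {x : HexVtx α}
    {t : EType} {i : ι} (h : edgeAt x t = m i) : ∃ s, endpoint m (i, s) = x := by
  rcases ends_edgeAt x t with he | he <;> rw [h] at he
  · exact ⟨true, by simp [endpoint, he]⟩
  · exact ⟨false, by simp [endpoint, he]⟩

def hexWalk (v : HexVtx α) (s : ℕ → EType) : ℕ → HexVtx α
  | 0 => v
  | i + 1 => neighbor (hexWalk v s i) (s i)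

lemma hexWalk_congr (v : HexVtx α) {s s' : ℕ → EType} {i : ℕ}
    (h : ∀ j < i, s j = s' j) : hexWalk v s i = hexWalk v s' i := by
  induction i with
  | zero => rfl
  | succ i ih =>
    simp only [hexWalk]
    rw [ih fun j hj => h j (by omega), h i (by omega)]

/-- Two consecutive `a`-steps return to the same vertex, so each block `{3i, 3i+1}` of step
indices contains a `b`- or `c`-step; steps from different blocks share no endpoint. -/
lemma exists_matching_of_injOn_hexWalk {v : HexVtx α} {s : ℕ → EType} {k : ℕ}
    (hinj : Set.InjOn (hexWalk v s) (Set.Iic (3 * k))) :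
    ∃ m : Fin k → HexEdge α, (∀ i, (m i).1 ≠ .a) ∧ Function.Injective (endpoint m) ∧
      ∀ i, ∃ j < 3 * k, m i = edgeAt (hexWalk v s j) (s j) := by
  have hpick : ∀ i : Fin k, ∃ j, (j = 3 * i.val ∨ j = 3 * i.val + 1) ∧ s j ≠ .a := by
    intro i
    by_contra! hcon
    have hback : hexWalk v s (3 * i + 2) = hexWalk v s (3 * i) := by
      simp only [hexWalk, hcon _ (Or.inl rfl), hcon _ (Or.inr rfl), neighbor_neighbor_a]
    have := hinj (Set.mem_Iic.mpr (by omega)) (Set.mem_Iic.mpr (by omega)) hback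
    omega
  choose g hg hgs using hpick
  have hgk : ∀ i : Fin k, g i < 3 * k := fun i => by rcases hg i with h | h <;> omega
  set m : Fin k → HexEdge α := fun i => edgeAt (hexWalk v s (g i)) (s (g i))
  refine ⟨m, fun i => by simpa [m] using hgs i, ?_, fun i => ⟨g i, hgk i, rfl⟩⟩
  have hidx : ∀ i si, ∃ j, (j = g i ∨ j = g i + 1) ∧
      endpoint m (i, si) = hexWalk v s j := by
    intro i si
    rcases endpoint_eq_or (m := m) (i, si) rfl with h | h
    · exact ⟨g i, Or.inl rfl, h⟩
    · exact ⟨g i + 1, Or.inr rfl, h⟩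
  rintro ⟨i, si⟩ ⟨i', si'⟩ hzz
  obtain ⟨j, hj, hzj⟩ := hidx i si
  obtain ⟨j', hj', hzj'⟩ := hidx i' si'
  have hjj : j = j' := hinj (Set.mem_Iic.mpr (by have := hgk i; omega))
    (Set.mem_Iic.mpr (by have := hgk i'; omega)) (hzj.symm.trans (hzz.trans hzj'))
  have hii : i = i' := by
    ext
    rcases hg i with h | h <;> rcases hg i' with h' | h' <;> omega
  subst hii
  cases si <;> cases si'
  · rfl
  · exact absurd hzz.symm (ends_fst_ne_snd _)
  · exact absurd hzz (ends_fst_ne_snd _)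
  · rfl

end Geometry

lemma hexAdj_iff {x y : VI} : hexAdj x y ↔ ∃ t, y = neighbor x t := by
  constructor
  · rintro ⟨e, h⟩
    have hx : edgeAt x e.1 = e := by
      rcases h with h | h
      · rw [show x = (ends e).1 by rw [h]]; exact edgeAt_ends_fst e
      · rw [show x = (ends e).2 by rw [h]]; exact edgeAt_ends_snd e
    refine ⟨e.1, ?_⟩
    rcases ends_edgeAt x e.1 with h' | h' <;> rw [hx] at h' <;> rcases h with h | h <;>
      simp_all [Prod.ext_iff]
  · rintro ⟨t, rfl⟩
    exact ⟨edgeAt x t, ends_edgeAt x t⟩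

lemma hexAdj_symm {x y : VI} (h : hexAdj x y) : hexAdj y x := by
  obtain ⟨e, h⟩ := h
  exact ⟨e, h.symm⟩

lemma abs_neighbor_sub_le (x : VI) (t : EType) :
    |(neighbor x t).1.1 - x.1.1| ≤ 1 ∧ |(neighbor x t).1.2 - x.1.2| ≤ 1 := by
  obtain ⟨⟨p, q⟩, _ | _⟩ := x <;> cases t <;> simp [neighbor]

lemma abs_hexWalk_sub_le (v : VI) (s : ℕ → EType) (i : ℕ) :
    |(hexWalk v s i).1.1 - v.1.1| ≤ i ∧ |(hexWalk v s i).1.2 - v.1.2| ≤ i := by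
  induction i with
  | zero => simp [hexWalk]
  | succ i ih =>
    obtain ⟨h₁, h₂⟩ := abs_neighbor_sub_le (hexWalk v s i) (s i)
    simp only [hexWalk, Nat.cast_succ]
    constructor
    · linarith [abs_sub_le (neighbor (hexWalk v s i) (s i)).1.1 (hexWalk v s i).1.1 v.1.1]
    · linarith [abs_sub_le (neighbor (hexWalk v s i) (s i)).1.2 (hexWalk v s i).1.2 v.1.2]

lemma finite_setOf_abs_sub_le (v : VI) (R : ℤ) :
    {u : VI | |u.1.1 - v.1.1| ≤ R ∧ |u.1.2 - v.1.2| ≤ R}.Finite := by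
  refine (((Set.finite_Icc (v.1.1 - R) (v.1.1 + R)).prod
    (Set.finite_Icc (v.1.2 - R) (v.1.2 + R))).prod Set.finite_univ).subset ?_
  rintro ⟨⟨p, q⟩, _⟩ ⟨h₁, h₂⟩
  rw [abs_le] at h₁ h₂
  simp only [Set.mem_prod, Set.mem_Icc, Set.mem_univ, and_true]
  constructor <;> constructor <;> linarith

lemma exists_hexWalk_eq_getVert {G : SimpleGraph VI} (hG : ∀ x y, G.Adj x y → hexAdj x y)
    {v u : VI} (p : G.Walk v u) :
    ∃ s : ℕ → EType, ∀ j ≤ p.length, hexWalk v s j = p.getVert j := by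
  have hstep : ∀ i < p.length, ∃ t, p.getVert (i + 1) = neighbor (p.getVert i) t :=
    fun i hi => hexAdj_iff.mp (hG _ _ (p.adj_getVert_succ hi))
  have : Nonempty EType := ⟨.a⟩
  choose! s hs using hstep
  refine ⟨s, fun j hj => ?_⟩
  induction j with
  | zero => simp [hexWalk]
  | succ j ih => rw [hexWalk, ih (by omega), hs j (by omega)]

def IsTypeAPath (ω : Config) (x : ℕ → VI) (L : ℕ) : Prop :=
  Set.InjOn x (Set.Iic L) ∧ ∀ i < L, aAdj ω (x i) (x (i + 1))

def typeAPathEvent (v : VI) (L : ℕ) : Set Config :=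
  ⋃ s : Fin L → EType,
    {ω | IsTypeAPath ω (hexWalk v (Function.extend Fin.val s fun _ => .a)) L}

def aGraph (ω : Config) : SimpleGraph VI := SimpleGraph.fromRel (aAdj ω)

lemma aAdj_of_aGraph_adj {ω : Config} {x y : VI} (h : (aGraph ω).Adj x y) : aAdj ω x y := by
  obtain ⟨-, h | ⟨hxy, hy, hx⟩⟩ := h
  · exact h
  · exact ⟨hexAdj_symm hxy, hx, hy⟩

lemma aGraph_reachable_of_mem_aCluster {ω : Config} {v u : VI} (hu : u ∈ aCluster ω v) :
    (aGraph ω).Reachable v u := by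
  rw [SimpleGraph.reachable_iff_reflTransGen]
  induction hu with
  | refl => exact .refl
  | @tail p q _ hpq ih =>
    by_cases hne : p = q
    · exact hne ▸ ih
    · exact ih.tail ⟨hne, Or.inl hpq⟩

/-- An infinite cluster leaves every box around `v`, and a shortest path to a vertex
outside the box of radius `L` has length greater than `L`. -/
lemma mem_typeAPathEvent_of_infinite {ω : Config} {v : VI} (h : (aCluster ω v).Infinite)
    (L : ℕ) : ω ∈ typeAPathEvent v L := by
  obtain ⟨u, hu, hfar⟩ := (h.sdiff (finite_setOf_abs_sub_le v L)).nonempty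
  obtain ⟨p⟩ := aGraph_reachable_of_mem_aCluster hu
  let q := p.bypass
  have hq : q.IsPath := p.bypass_isPath
  obtain ⟨s, hs⟩ := exists_hexWalk_eq_getVert (fun x y hxy => (aAdj_of_aGraph_adj hxy).1) q
  have hL : L < q.length := by
    by_contra! hle
    have hend : hexWalk v s q.length = u := (hs _ le_rfl).trans q.getVert_length
    have := abs_hexWalk_sub_le v s q.length
    rw [hend] at this
    exact hfar ⟨this.1.trans (by exact_mod_cast hle), this.2.trans (by exact_mod_cast hle)⟩
  refine Set.mem_iUnion.mpr ⟨fun i => s i, ?_⟩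
  have hwalk : ∀ j ≤ L,
      hexWalk v (Function.extend Fin.val (fun i : Fin L => s i) fun _ => .a) j = q.getVert j :=
    fun j hj =>
      (hexWalk_congr v fun i hi => Fin.val_injective.extend_apply _ _ ⟨i, by omega⟩).trans
        (hs j (by omega))
  refine ⟨fun i hi j hj hij =>
    hq.getVert_injOn (by simp at hi ⊢; omega) (by simp at hj ⊢; omega)
      (by rwa [hwalk i hi, hwalk j hj] at hij), fun i hi => ?_⟩
  rw [hwalk i hi.le, hwalk (i + 1) hi]
  exact aAdj_of_aGraph_adj (q.adj_getVert_succ (by omega))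

lemma isClopen_setOf_typeA (x : VI) : IsClopen {ω : Config | typeA ω x} :=
  (isClopen_discrete {p : Bool × Bool × Bool | p.2.1 = p.2.2 ∧ p.1 ≠ p.2.1}).preimage
    (f := fun ω : Config => (ω (edgeAt x .a), ω (edgeAt x .b), ω (edgeAt x .c))) (by fun_prop)

lemma isClopen_setOf_aAdj (x y : VI) : IsClopen {ω : Config | aAdj ω x y} := by
  by_cases h : hexAdj x y
  · simpa [aAdj, h, Set.ofPred_and] using (isClopen_setOf_typeA x).inter (isClopen_setOf_typeA y)
  · simp [aAdj, h, isClopen_empty]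

lemma isClopen_setOf_isTypeAPath (x : ℕ → VI) (L : ℕ) :
    IsClopen {ω : Config | IsTypeAPath ω x L} := by
  by_cases h : Set.InjOn x (Set.Iic L)
  · have : {ω : Config | IsTypeAPath ω x L} =
        ⋂ i ∈ Finset.range L, {ω | aAdj ω (x i) (x (i + 1))} := by
      ext; simp [IsTypeAPath, h]
    rw [this]
    exact isClopen_biInter_finset fun i _ => isClopen_setOf_aAdj _ _
  · simp [IsTypeAPath, h, isClopen_empty]

lemma isClopen_typeAPathEvent (v : VI) (L : ℕ) : IsClopen (typeAPathEvent v L) :=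
  isClopen_iUnion_of_finite fun _ => isClopen_setOf_isTypeAPath _ _

def HasTypeA {α : Type} [Sub α] [One α] (σ : HexEdge α → Bool) (u : HexVtx α) : Prop :=
  σ (edgeAt u .b) = σ (edgeAt u .c) ∧ σ (edgeAt u .a) ≠ σ (edgeAt u .b)

def toTorus (n : ℕ) (x : VI) : VF n := (((x.1.1 : ZMod n), (x.1.2 : ZMod n)), x.2)

lemma toTorus_neighbor (n : ℕ) (x : VI) (t : EType) :
    toTorus n (neighbor x t) = neighbor (toTorus n x) t := by
  obtain ⟨⟨p, q⟩, _ | _⟩ := x <;> cases t <;> simp [neighbor, toTorus]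

lemma toTorus_hexWalk (n : ℕ) (v : VI) (s : ℕ → EType) (i : ℕ) :
    toTorus n (hexWalk v s i) = hexWalk (toTorus n v) s i := by
  induction i with
  | zero => rfl
  | succ i ih => simp only [hexWalk, toTorus_neighbor, ih]

lemma liftConf_edgeAt (n : ℕ) (σ : ConfF n) (x : VI) (t : EType) :
    liftConf n σ (edgeAt x t) = σ (edgeAt (toTorus n x) t) := by
  obtain ⟨⟨p, q⟩, _ | _⟩ := x <;> cases t <;> simp [liftConf, edgeAt, toTorus]

lemma typeA_liftConf_iff (n : ℕ) (σ : ConfF n) (x : VI) :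
    typeA (liftConf n σ) x ↔ HasTypeA σ (toTorus n x) := by
  simp only [typeA, HasTypeA, liftConf_edgeAt]

lemma eq_of_toTorus_eq {n : ℕ} {x y : VI} (h₁ : |x.1.1 - y.1.1| < n)
    (h₂ : |x.1.2 - y.1.2| < n)     (h : toTorus n x = toTorus n y) : x = y := by
  have key : ∀ p q : ℤ, |p - q| < n → (p : ZMod n) = q → p = q := fun p q hpq hcast => by
    have := Int.eq_zero_of_abs_lt_dvd ((ZMod.intCast_eq_intCast_iff_dvd_sub q p n).mp hcast.symm)
      hpq
    omega
  simp only [toTorus, Prod.mk.injEq] at h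
  exact Prod.ext (Prod.ext (key _ _ h₁ h.1.1) (key _ _ h₂ h.1.2)) h.2

/-- A walk of length `L` on `H` stays in a box of side `2L`, on which the quotient map to
`H_n` is injective once `2L < n`. -/
lemma injOn_hexWalk_toTorus {n L : ℕ} (hn : 2 * L < n) {v : VI} {s : ℕ → EType}
    (hinj : Set.InjOn (hexWalk v s) (Set.Iic L)) :
    Set.InjOn (hexWalk (toTorus n v) s) (Set.Iic L) := by
  intro i hi j hj hij
  rw [← toTorus_hexWalk, ← toTorus_hexWalk] at hij
  have hi' : (i : ℤ) ≤ L := by exact_mod_cast hi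
  have hj' : (j : ℤ) ≤ L := by exact_mod_cast hj
  have hn' : 2 * (L : ℤ) < n := by exact_mod_cast hn
  obtain ⟨hi₁, hi₂⟩ := abs_hexWalk_sub_le v s i
  obtain ⟨hj₁, hj₂⟩ := abs_hexWalk_sub_le v s j
  refine hinj hi hj (eq_of_toTorus_eq ?_ ?_ hij)
  · linarith [abs_sub_le (hexWalk v s i).1.1 v.1.1 (hexWalk v s j).1.1,
      abs_sub_comm (hexWalk v s j).1.1 v.1.1]
  · linarith [abs_sub_le (hexWalk v s i).1.2 v.1.2 (hexWalk v s j).1.2,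
      abs_sub_comm (hexWalk v s j).1.2 v.1.2]

section Weights

variable {a b c : ℝ}

lemma vWt_nonneg (ha : 0 ≤ a) (hb : 0 ≤ b) (hc : 0 ≤ c) (sa sb sc : Bool) :
    0 ≤ vWt a b c sa sb sc := by
  unfold vWt
  split_ifs <;> first | assumption | exact le_rfl

lemma vWt_of_typeA {sa sb sc : Bool} (h : sb = sc) (h' : sa ≠ sb) : vWt a b c sa sb sc = a := by
  cases sa <;> cases sb <;> cases sc <;> simp_all [vWt]

lemma min_le_vWt_not_b {sa sb sc : Bool} (h : sb = sc) (h' : sa ≠ sb) :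
    min b c ≤ vWt a b c sa (!sb) sc := by
  cases sa <;> cases sb <;> cases sc <;> simp_all [vWt]

lemma min_le_vWt_not_c {sa sb sc : Bool} (h : sb = sc) (h' : sa ≠ sb) :
    min b c ≤ vWt a b c sa sb (!sc) := by
  cases sa <;> cases sb <;> cases sc <;> simp_all [vWt]

variable {n : ℕ} [NeZero n]

lemma confWt_nonneg (ha : 0 ≤ a) (hb : 0 ≤ b) (hc : 0 ≤ c) (σ : ConfF n) :
    0 ≤ confWt n a b c σ :=
  Finset.prod_nonneg fun _ _ => vWt_nonneg ha hb hc _ _ _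

lemma Zn_nonneg (ha : 0 ≤ a) (hb : 0 ≤ b) (hc : 0 ≤ c) : 0 ≤ Zn n a b c :=
  Finset.sum_nonneg fun σ _ => confWt_nonneg ha hb hc σ

end Weights

section Flip

variable {n : ℕ} {a b c : ℝ} {ι : Type} {m : ι → EF n}

noncomputable def flipOn (M : Set (EF n)) (σ : ConfF n) : ConfF n :=
  fun e => if e ∈ M then !σ e else σ e

lemma flipOn_flipOn (M : Set (EF n)) (σ : ConfF n) : flipOn M (flipOn M σ) = σ := by
  funext e
  by_cases h : e ∈ M <;> simp [flipOn, h]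

def vWtAt (a b c : ℝ) (σ : ConfF n) (u : VF n) : ℝ :=
  vWt a b c (σ (edgeAt u .a)) (σ (edgeAt u .b)) (σ (edgeAt u .c))

lemma flipOn_edgeAt_of_notMem [Fintype ι] {u : VF n} (hu : u ∉ Finset.univ.image (endpoint m))
    (σ : ConfF n) (t : EType) : flipOn (Set.range m) σ (edgeAt u t) = σ (edgeAt u t) := by
  rw [flipOn, if_neg]
  rintro ⟨i, hi⟩
  obtain ⟨s, hs⟩ := exists_endpoint_eq_of_edgeAt_eq hi.symm
  exact hu (Finset.mem_image.mpr ⟨(i, s), Finset.mem_univ _, hs⟩)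

lemma edgeAt_endpoint_mem_range_iff (hm : Function.Injective (endpoint m)) (z : ι × Bool)
    (t : EType) : edgeAt (endpoint m z) t ∈ Set.range m ↔ t = (m z.1).1 := by
  constructor
  · rintro ⟨j, hj⟩
    obtain ⟨s, hs⟩ := exists_endpoint_eq_of_edgeAt_eq hj.symm
    rw [← congrArg Prod.fst (hm hs)]
    exact ((congrArg Prod.fst hj).trans (edgeAt_fst _ _)).symm
  · rintro rfl
    obtain ⟨i, _ | _⟩ := z
    · exact ⟨i, (edgeAt_ends_snd _).symm⟩
    · exact ⟨i, (edgeAt_ends_fst _).symm⟩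

/-- At a type-`a` endpoint exactly one incident edge, of type `b` or `c`, is flipped, which
turns the vertex weight `a` into `b` or `c`. -/
lemma vWtAt_endpoint_le (ha : 0 ≤ a) (hb : 0 < b) (hc : 0 < c) (hma : ∀ i, (m i).1 ≠ .a)
    (hm : Function.Injective (endpoint m)) {σ : ConfF n} {z : ι × Bool}
    (hσ : HasTypeA σ (endpoint m z)) :
    vWtAt a b c σ (endpoint m z) ≤
      a / min b c * vWtAt a b c (flipOn (Set.range m) σ) (endpoint m z) := by
  have hδ : 0 < min b c := lt_min hb hc
  have hflip : ∀ t, flipOn (Set.range m) σ (edgeAt (endpoint m z) t) =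
      if t = (m z.1).1 then !σ (edgeAt (endpoint m z) t) else σ (edgeAt (endpoint m z) t) :=
    fun t => by simp only [flipOn, edgeAt_endpoint_mem_range_iff hm]
  rw [vWtAt, vWt_of_typeA hσ.1 hσ.2]
  calc a = a / min b c * min b c := by field_simp
    _ ≤ _ := by
      refine mul_le_mul_of_nonneg_left ?_ (div_nonneg ha hδ.le)
      simp only [vWtAt, hflip]
      cases h : (m z.1).1 with
      | a => exact absurd h (hma _)
      | b => simpa using min_le_vWt_not_b hσ.1 hσ.2
      | c => simpa using min_le_vWt_not_c hσ.1 hσ.2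

lemma confWt_le_flipOn [NeZero n] [Fintype ι] (ha : 0 ≤ a) (hb : 0 < b) (hc : 0 < c)
    (hma : ∀ i, (m i).1 ≠ .a) (hm : Function.Injective (endpoint m)) {σ : ConfF n}
    (hσ : ∀ z, HasTypeA σ (endpoint m z)) :
    confWt n a b c σ ≤
      (a / min b c) ^ (2 * Fintype.card ι) * confWt n a b c (flipOn (Set.range m) σ) := by
  set E := Finset.univ.image (endpoint m)
  have hvert : ∀ u, vWtAt a b c σ u ≤
      (if u ∈ E then a / min b c else 1) * vWtAt a b c (flipOn (Set.range m) σ) u := by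
    intro u
    by_cases hu : u ∈ E
    · obtain ⟨z, -, rfl⟩ := Finset.mem_image.mp hu
      rw [if_pos hu]
      exact vWtAt_endpoint_le ha hb hc hma hm (hσ z)
    · simp only [if_neg hu, one_mul, vWtAt, flipOn_edgeAt_of_notMem hu, le_rfl]
  have hE : E.card = 2 * Fintype.card ι := by
    rw [Finset.card_image_of_injective _ hm, Finset.card_univ, Fintype.card_prod,
      Fintype.card_bool, mul_comm]
  calc confWt n a b c σ = ∏ u, vWtAt a b c σ u := rfl
    _ ≤ ∏ u, (if u ∈ E then a / min b c else 1) * vWtAt a b c (flipOn (Set.range m) σ) u :=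
      Finset.prod_le_prod (fun u _ => vWt_nonneg ha hb.le hc.le _ _ _) fun u _ => hvert u
    _ = _ := by
      rw [Finset.prod_mul_distrib, Fintype.prod_ite_mem, Finset.prod_const, hE]
      rfl

/-- Reversing the spins of a matching of `b`/`c`-edges with type-`a` endpoints is injective
and gains a factor `min b c / a` at each endpoint. -/
lemma sum_confWt_endpoints_typeA_le [NeZero n] [Fintype ι] (ha : 0 ≤ a) (hb : 0 < b) (hc : 0 < c)
    (hma : ∀ i, (m i).1 ≠ .a) (hm : Function.Injective (endpoint m)) :
    ∑ σ ∈ Finset.univ.filter (fun σ : ConfF n => ∀ z, HasTypeA σ (endpoint m z)),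
      confWt n a b c σ ≤ (a / min b c) ^ (2 * Fintype.card ι) * Zn n a b c := by
  set F := Finset.univ.filter (fun σ : ConfF n => ∀ z, HasTypeA σ (endpoint m z))
  set r := (a / min b c) ^ (2 * Fintype.card ι)
  have hr : 0 ≤ r := pow_nonneg (div_nonneg ha (le_min hb.le hc.le)) _
  have hflip : Function.Injective (flipOn (n := n) (Set.range m)) :=
    Function.LeftInverse.injective (flipOn_flipOn _)
  calc ∑ σ ∈ F, confWt n a b c σ
      ≤ ∑ σ ∈ F, r * confWt n a b c (flipOn (Set.range m) σ) :=
        Finset.sum_le_sum fun σ hσ =>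
          confWt_le_flipOn ha hb hc hma hm (Finset.mem_filter.mp hσ).2
    _ = r * ∑ σ ∈ F.image (flipOn (Set.range m)), confWt n a b c σ := by
        rw [Finset.sum_image fun σ _ τ _ h => hflip h, Finset.mul_sum]
    _ ≤ r * Zn n a b c :=
        mul_le_mul_of_nonneg_left (Finset.sum_le_sum_of_subset_of_nonneg (Finset.subset_univ _)
          fun σ _ _ => confWt_nonneg ha hb.le hc.le σ) hr

end Flip

section Measure

variable {n : ℕ} [NeZero n] {a b c : ℝ}

lemma muHat_le_ofReal (ha : 0 ≤ a) (hb : 0 ≤ b) (hc : 0 ≤ c) {A : Set Config} {r : ℝ}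
    (hr : 0 ≤ r)
    (h : ∑ σ ∈ Finset.univ.filter (fun σ => liftConf n σ ∈ A), confWt n a b c σ ≤
      r * Zn n a b c) :
    muHat n a b c A ≤ ENNReal.ofReal r := by
  rw [muHat, Measure.finsetSum_apply]
  simp only [Measure.smul_apply, Measure.dirac_apply, smul_eq_mul, Set.indicator_apply,
    Pi.one_apply, mul_ite, mul_one, mul_zero]
  rw [← Finset.sum_filter, ← ENNReal.ofReal_sum_of_nonneg fun σ _ =>
    div_nonneg (confWt_nonneg ha hb hc σ) (Zn_nonneg ha hb hc), ← Finset.sum_div]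
  exact ENNReal.ofReal_le_ofReal (div_le_of_le_mul₀ (Zn_nonneg ha hb hc) hr h)

lemma sum_confWt_isTypeAPath_le (ha : 0 ≤ a) (hb : 0 < b) (hc : 0 < c) {k : ℕ} (hn : 6 * k < n)
    (v : VI) (s : ℕ → EType) :
    ∑ σ ∈ Finset.univ.filter
        (fun σ : ConfF n => IsTypeAPath (liftConf n σ) (hexWalk v s) (3 * k)),
      confWt n a b c σ ≤ (a / min b c) ^ (2 * k) * Zn n a b c := by
  by_cases hinj : Set.InjOn (hexWalk v s) (Set.Iic (3 * k))
  · obtain ⟨m, hma, hm, hmw⟩ :=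
      exists_matching_of_injOn_hexWalk (injOn_hexWalk_toTorus (n := n) (L := 3 * k) (by omega) hinj)
    have hsub : Finset.univ.filter
          (fun σ : ConfF n => IsTypeAPath (liftConf n σ) (hexWalk v s) (3 * k)) ⊆
        Finset.univ.filter (fun σ : ConfF n => ∀ z, HasTypeA σ (endpoint m z)) := by
      intro σ hσ
      simp only [Finset.mem_filter, Finset.mem_univ, true_and] at hσ ⊢
      intro z
      obtain ⟨j, hj, hmj⟩ := hmw z.1
      obtain ⟨-, hj₁, hj₂⟩ := hσ.2 j hj
      rcases endpoint_eq_or z hmj with h | h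
      · rwa [h, ← toTorus_hexWalk, ← typeA_liftConf_iff]
      · rwa [h, show neighbor _ (s j) = hexWalk (toTorus n v) s (j + 1) from rfl,
          ← toTorus_hexWalk, ← typeA_liftConf_iff]
    calc _ ≤ _ := Finset.sum_le_sum_of_subset_of_nonneg hsub fun σ _ _ =>
          confWt_nonneg ha hb.le hc.le σ
      _ ≤ _ := by simpa using sum_confWt_endpoints_typeA_le ha hb hc hma hm
  · rw [Finset.filter_false_of_mem fun σ _ h => hinj h.1, Finset.sum_empty]
    exact mul_nonneg (pow_nonneg (div_nonneg ha (le_min hb.le hc.le)) _) (Zn_nonneg ha hb.le hc.le)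

/-- Union bound over the `3 ^ (3k)` codes of walks of length `3k`. -/
lemma muHat_typeAPathEvent_le (ha : 0 ≤ a) (hb : 0 < b) (hc : 0 < c) {k : ℕ} (hn : 6 * k < n)
    (v : VI) :
    muHat n a b c (typeAPathEvent v (3 * k)) ≤ ENNReal.ofReal ((27 * (a / min b c) ^ 2) ^ k) := by
  have hr : 0 ≤ (a / min b c) ^ (2 * k) := pow_nonneg (div_nonneg ha (le_min hb.le hc.le)) _
  calc muHat n a b c (typeAPathEvent v (3 * k))
      ≤ ∑ s : Fin (3 * k) → EType, muHat n a b c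
          {ω | IsTypeAPath ω (hexWalk v (Function.extend Fin.val s fun _ => .a)) (3 * k)} :=
        measure_iUnion_fintype_le _ _
    _ ≤ ∑ _s : Fin (3 * k) → EType, ENNReal.ofReal ((a / min b c) ^ (2 * k)) :=
        Finset.sum_le_sum fun s _ =>
          muHat_le_ofReal ha hb.le hc.le hr (sum_confWt_isTypeAPath_le ha hb hc hn v _)
    _ = ENNReal.ofReal ((27 * (a / min b c) ^ 2) ^ k) := by
        rw [Finset.sum_const, Finset.card_univ, Fintype.card_fun, Fintype.card_fin, nsmul_eq_mul,
          ← ENNReal.ofReal_natCast, ← ENNReal.ofReal_mul (by positivity)]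
        congr 1
        have : Fintype.card EType = 3 := rfl
        rw [this, mul_pow, ← pow_mul, pow_mul]
        norm_num

end Measure

lemma measure_le_of_isWeakLimit {a b c : ℝ} {μ : Measure Config} (hμ : IsWeakLimit a b c μ)
    {A : Set Config} (hA : IsClopen A) {r : ℝ} (hr : 0 ≤ r)
    (h : ∀ᶠ n in atTop, muHat (n + 1) a b c A ≤ ENNReal.ofReal r) :
    μ A ≤ ENNReal.ofReal r := by
  have hint : ∀ ν : Measure Config, ∫ ω, BoundedContinuousFunction.indicator A hA ω ∂ν =
      ν.real A := fun ν => by simp [integral_indicator_one hA.isOpen.measurableSet]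
  have hlim := hμ.2 (BoundedContinuousFunction.indicator A hA)
  simp only [hint] at hlim
  have := hμ.1
  exact (ENNReal.le_ofReal_iff_toReal_le (measure_ne_top μ A) hr).mpr
    (le_of_tendsto hlim (h.mono fun n hn => ENNReal.toReal_le_of_le_ofReal hr hn))

lemma measure_infinite_aCluster_le {a b c : ℝ} (ha : 0 ≤ a) (hb : 0 < b) (hc : 0 < c)
    {μ : Measure Config} (hμ : IsWeakLimit a b c μ) (v : VI) (k : ℕ) :
    μ {ω | (aCluster ω v).Infinite} ≤ ENNReal.ofReal ((27 * (a / min b c) ^ 2) ^ k) :=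
  (measure_mono fun _ hω => mem_typeAPathEvent_of_infinite hω (3 * k)).trans
    (measure_le_of_isWeakLimit hμ (isClopen_typeAPathEvent v _) (by positivity)
      ((eventually_gt_atTop (6 * k)).mono fun _ hn =>
        muHat_typeAPathEvent_le ha hb hc (by omega) v))

lemma eq_zero_of_le_ofReal_pow {x : ENNReal} {ρ : ℝ} (h₀ : 0 ≤ ρ) (h₁ : ρ < 1)
    (h : ∀ k : ℕ, x ≤ ENNReal.ofReal (ρ ^ k)) : x = 0 :=
  le_antisymm (ge_of_tendsto' (by
    simpa using ENNReal.tendsto_ofReal (tendsto_pow_atTop_nhds_zero_of_lt_one h₀ h₁)) h) bot_le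

end OneTwoModel

/-- Fix `b,c > 0`. For all sufficiently small `a > 0`, the weak
limit `μ̄` of `(μ̂_n)` almost surely has no infinite type-`a` cluster. -/
theorem no_infinite_typeA_cluster_small_a
    (b c : ℝ) (hb : 0 < b) (hc : 0 < c) :
    ∃ a₀ : ℝ, 0 < a₀ ∧ ∀ a : ℝ, 0 < a → a < a₀ →
      ∀ μbar : Measure Config, IsWeakLimit a b c μbar →
        μbar {ω : Config | ∃ v : VI, (aCluster ω v).Infinite} = 0 := by
  refine ⟨min b c / 6, by positivity, fun a ha ha₀ μbar hμ => ?_⟩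
  have hδ : 0 < min b c := lt_min hb hc
  have hρ : 27 * (a / min b c) ^ 2 < 1 := by
    have : a / min b c < 1 / 6 := by rw [div_lt_iff₀ hδ]; linarith
    nlinarith [div_nonneg ha.le hδ.le]
  have hv : ∀ v, μbar {ω | (aCluster ω v).Infinite} = 0 := fun v =>
    OneTwoModel.eq_zero_of_le_ofReal_pow (by positivity) hρ
      (OneTwoModel.measure_infinite_aCluster_le ha.le hb hc hμ v)
  simpa only [Set.ofPred_exists] using measure_iUnion_null hv
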